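/- arXiv:1709.07083 — 4 statements merged into one kernel-verified Lean document; each statement's English description precedes it below -/
import Mathlib

section
/- Let K, L be Euclidean balls with centers O_K, O_L and radii r_K, r_L contained in the interior of rB^d. Let z be a point of rS^{d-1} lying on the line through O_K and O_L. If r_L < r_K and the distance from z to O_L is at least the distance from z to O_K, then the spherical projection L_z is a proper subset of K_z; in particular K_z and L_z are not congruent. -/
open Metric Set

/-- The spherical projection of a set `M` from a point `z` on the sphere of radius `r`:
all points `x` of the sphere such that the segment `xz` meets `M`. -/
def sphProj {d : ℕ} (r : ℝ) (M : Set (EuclideanSpace ℝ (Fin d)))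
    (z : EuclideanSpace ℝ (Fin d)) : Set (EuclideanSpace ℝ (Fin d)) :=
  {x | ‖x‖ = r ∧ (segment ℝ x z ∩ M).Nonempty}

/-!
Since `O_L = z + c • (O_K - z)` with `c ≥ 1`, the homothety with centre `z` and ratio `c⁻¹` keeps
every segment `xz` and maps `L` into the ball of radius `r_L / c < r_K` about `O_K`; hence `L_z` is
contained in the projection of that smaller ball, which lies in `K_z`. A line through `z` tangent
to `K` leaves the sphere at a point of `K_z` whose segment to `z` stays at distance `≥ r_K` from
`O_K`, so that point is not in `L_z`. Finally `K_z` is compact, and an isometry cannot map a compact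
set onto a proper subset of itself: the orbit of a point outside the image would be uniformly
separated.
-/

open AffineMap
open scoped RealInnerProductSpace

theorem Isometry.image_eq_self_of_isCompact {α : Type*} [MetricSpace α] {f : α → α}
    (hf : Isometry f) {A : Set α} (hA : IsCompact A) (hfA : f '' A ⊆ A) : f '' A = A := by
  refine hfA.antisymm fun x hx => by_contra fun hxf => ?_
  obtain ⟨ε, hε, hball⟩ := isOpen_iff.mp (hA.image hf.continuous).isClosed.isOpen_compl x hxf
  have hiter (n : ℕ) : Isometry f^[n] := by
    induction n with
    | zero => exact isometry_id
    | succ n ih => exact ih.comp hf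
  have horbit (n : ℕ) : f^[n] x ∈ A := by
    induction n with
    | zero => exact hx
    | succ n ih => rw [Function.iterate_succ_apply']; exact hfA (mem_image_of_mem f ih)
  obtain ⟨_, -, ψ, hψ, hlim⟩ := hA.tendsto_subseq horbit
  obtain ⟨N, hN⟩ := Metric.cauchySeq_iff'.mp hlim.cauchySeq ε hε
  obtain ⟨k, hk⟩ : ∃ k, ψ (N + 1) = ψ N + (k + 1) :=
    Nat.exists_eq_add_of_lt (hψ (Nat.lt_succ_self N))
  have hclose : f^[k + 1] x ∈ ball x ε := by
    have := hN (N + 1) N.le_succ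
    rwa [Function.comp_apply, Function.comp_apply, hk, Function.iterate_add_apply,
      (hiter (ψ N)).dist_eq] at this
  refine hball hclose ?_
  rw [Function.iterate_succ_apply']
  exact mem_image_of_mem f (horbit k)

section InnerProductSpace

variable {E : Type*} [NormedAddCommGroup E] [InnerProductSpace ℝ E]

theorem exists_norm_eq_one_real_inner_eq (hE : 1 < Module.rank ℝ E) {w : E} (hw : w ≠ 0)
    {a : ℝ} (ha : |a| ≤ ‖w‖) : ∃ u : E, ‖u‖ = 1 ∧ ⟪u, w⟫ = a := by
  set e := ‖w‖⁻¹ • w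
  have he : e ∈ sphere (0 : E) 1 := by simp [e, norm_smul, hw]
  have hinner : ⟪e, w⟫ = ‖w‖ := by
    simp only [e, real_inner_smul_left, real_inner_self_eq_norm_sq]
    field_simp [norm_ne_zero_iff.mpr hw]
  obtain ⟨u, hu, hua⟩ := (isPreconnected_sphere hE 0 1).intermediate_value
    (by simpa using he) he (continuous_id.inner continuous_const).continuousOn
    (show a ∈ Icc ⟪-e, w⟫ ⟪e, w⟫ by
      rw [inner_neg_left, hinner]; exact abs_le.mp ha)
  exact ⟨u, by simpa using hu, hua⟩

theorem exists_one_lt_norm_add_smul_eq {z v : E} {r : ℝ} (hz : ‖z‖ = r) (hv : ‖z + v‖ < r) :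
    ∃ t : ℝ, 1 < t ∧ ‖z + t • v‖ = r := by
  have hexpand (t : ℝ) : ‖z + t • v‖ ^ 2 = r ^ 2 + t * (2 * ⟪z, v⟫ + t * ‖v‖ ^ 2) := by
    rw [norm_add_sq_real, real_inner_smul_right, norm_smul, Real.norm_eq_abs, mul_pow, sq_abs, hz]
    ring
  have hv0 : v ≠ 0 := by rintro rfl; simp [hz] at hv
  have hvpos : 0 < ‖v‖ ^ 2 := by positivity
  have hneg : ‖v‖ ^ 2 < -2 * ⟪z, v⟫ := by
    have := hexpand 1
    rw [one_smul] at this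
    nlinarith [norm_nonneg (z + v)]
  -- the second root of the quadratic `t ↦ ‖z + t • v‖ ^ 2 - r ^ 2`, whose other root is `0`
  refine ⟨-2 * ⟪z, v⟫ / ‖v‖ ^ 2, (one_lt_div hvpos).mpr hneg, ?_⟩
  have hsq : ‖z + (-2 * ⟪z, v⟫ / ‖v‖ ^ 2) • v‖ ^ 2 = r ^ 2 := by
    rw [hexpand]; field_simp; ring
  have hr : 0 ≤ r := hz ▸ norm_nonneg z
  exact (pow_left_inj₀ (norm_nonneg _) hr two_ne_zero).mp hsq

theorem segment_add_smul_self_eq_image {z v : E} {t : ℝ} (ht : 0 ≤ t) :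
    segment ℝ (z + t • v) z = (fun s : ℝ => z + s • v) '' Icc 0 t := by
  have hline : (fun s : ℝ => z + s • v) = lineMap z (z + v) := by
    ext s; simp [lineMap_apply_module', add_comm]
  rw [hline, ← segment_eq_Icc ht, image_segment, segment_symm ℝ (z + t • v)]
  simp [lineMap_apply_module', add_comm]

theorem exists_tangent_point_of_lt_dist (hE : 1 < Module.rank ℝ E) {z O : E} {R : ℝ} (hR : 0 ≤ R)
    (hzO : R < dist z O) : ∃ v : E, dist (z + v) O = R ∧ ∀ s : ℝ, R ≤ dist (z + s • v) O := by
  set h := dist z O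
  have hw : ‖O - z‖ = h := by rw [← dist_eq_norm, dist_comm]
  set a := √(h ^ 2 - R ^ 2)
  have ha : a ^ 2 = h ^ 2 - R ^ 2 := Real.sq_sqrt (by nlinarith)
  obtain ⟨u, hu, huw⟩ := exists_norm_eq_one_real_inner_eq hE (w := O - z)
    (norm_pos_iff.mp (hw ▸ hR.trans_lt hzO)) (a := a)
    (abs_le_of_sq_le_sq (by rw [ha, hw]; nlinarith) (hw ▸ dist_nonneg))
  have hdist (s : ℝ) : dist (z + s • a • u) O ^ 2 = a ^ 2 * (s - 1) ^ 2 + R ^ 2 := by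
    rw [dist_eq_norm, show z + s • a • u - O = (s * a) • u - (O - z) by module, norm_sub_sq_real,
      real_inner_smul_left, huw, norm_smul, Real.norm_eq_abs, mul_pow, sq_abs, hu, hw]
    nlinarith
  refine ⟨a • u, ?_, fun s => ?_⟩
  · have := hdist 1
    rw [one_smul, sub_self] at this
    exact (pow_left_inj₀ dist_nonneg hR two_ne_zero).mp (by linarith)
  · exact (pow_le_pow_iff_left₀ hR dist_nonneg two_ne_zero).mp (by nlinarith [hdist s])

end InnerProductSpace

theorem one_le_of_norm_lineMap_lt {E : Type*} [NormedAddCommGroup E] [NormedSpace ℝ E]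
    {z y : E} {r c : ℝ} (hz : ‖z‖ = r) (hy : ‖y‖ < r) (hc : ‖lineMap z y c‖ < r)
    (hdist : dist z y ≤ dist z (lineMap z y c)) : 1 ≤ c := by
  have hpos : 0 < c := by
    have hconv : (lineMap z y ⁻¹' ball (0 : E) r).OrdConnected :=
      ((convex_ball 0 r).affine_preimage (lineMap z y)).ordConnected
    by_contra! hc0
    have := hconv.out (by simpa using hc) (by simpa using hy) ⟨hc0, zero_le_one⟩
    simp [hz] at this
  have hzy : 0 < dist z y := dist_pos.mpr fun h => by simp [← h, hz] at hy
  rw [dist_left_lineMap, Real.norm_eq_abs, abs_of_pos hpos] at hdist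
  nlinarith

section SphericalProjection

variable {d : ℕ} {r : ℝ} {z : EuclideanSpace ℝ (Fin d)}

theorem sphProj_mono {M N : Set (EuclideanSpace ℝ (Fin d))} (h : M ⊆ N) :
    sphProj r M z ⊆ sphProj r N z :=
  fun _ ⟨hx, hM⟩ => ⟨hx, hM.mono (inter_subset_inter_right _ h)⟩

theorem isCompact_sphProj {M : Set (EuclideanSpace ℝ (Fin d))} (hM : IsClosed M) :
    IsCompact (sphProj r M z) := by
  set S := {p : EuclideanSpace ℝ (Fin d) × Icc (0 : ℝ) 1 | lineMap p.1 z (p.2 : ℝ) ∈ M}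
  have hS : IsClosed S := hM.preimage (by simp only [lineMap_apply_module']; fun_prop)
  have hsphProj : sphProj r M z = sphere 0 r ∩ Prod.fst '' S := by
    ext x
    simp [sphProj, S, segment_eq_image_lineMap, Set.Nonempty]
  rw [hsphProj]
  exact (isCompact_sphere 0 r).inter_right (isClosedMap_fst_of_compactSpace S hS)

theorem sphProj_closedBall_lineMap_subset {O : EuclideanSpace ℝ (Fin d)} {c ρ : ℝ} (hc : 1 ≤ c) :
    sphProj r (closedBall (lineMap z O c) ρ) z ⊆ sphProj r (closedBall O (ρ / c)) z := by
  rintro x ⟨hx, p, hpseg, hp⟩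
  have hc0 : 0 < c := zero_lt_one.trans_le hc
  refine ⟨hx, lineMap z p c⁻¹, ?_, ?_⟩
  · exact (convex_segment x z).lineMap_mem (right_mem_segment ℝ x z) hpseg
      ⟨inv_nonneg.mpr hc0.le, inv_le_one_of_one_le₀ hc⟩
  · have hshrink : lineMap z p c⁻¹ - O = c⁻¹ • (p - lineMap z O c) := by
      simp only [lineMap_apply_module', smul_sub, smul_add, smul_smul, inv_mul_cancel₀ hc0.ne',
        one_smul]
      abel
    rw [mem_closedBall, dist_eq_norm, hshrink, norm_smul,
      Real.norm_of_nonneg (inv_nonneg.mpr hc0.le), inv_mul_eq_div]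
    exact div_le_div_of_nonneg_right (by rwa [← dist_eq_norm]) hc0.le

theorem exists_mem_sphProj_notMem_sphProj (hd : 2 ≤ d) (hz : ‖z‖ = r)
    {O : EuclideanSpace ℝ (Fin d)} {R ρ : ℝ} (hR : 0 ≤ R) (hρ : ρ < R)
    (hball : closedBall O R ⊆ ball 0 r) :
    ∃ x ∈ sphProj r (closedBall O R) z, x ∉ sphProj r (closedBall O ρ) z := by
  have hrank : 1 < Module.rank ℝ (EuclideanSpace ℝ (Fin d)) := by
    rw [← Module.finrank_eq_rank, finrank_euclideanSpace_fin]
    exact_mod_cast hd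
  have hzO : R < dist z O := by
    by_contra! h
    exact (mem_ball_zero_iff.mp (hball (mem_closedBall.mpr h))).ne hz
  obtain ⟨v, hvR, htangent⟩ := exists_tangent_point_of_lt_dist hrank hR hzO
  have hv : ‖z + v‖ < r := mem_ball_zero_iff.mp (hball (mem_closedBall.mpr hvR.le))
  obtain ⟨t, ht, hxr⟩ := exists_one_lt_norm_add_smul_eq hz hv
  have hseg := segment_add_smul_self_eq_image (z := z) (v := v) (zero_le_one.trans ht.le)
  refine ⟨z + t • v, ⟨hxr, z + v, ?_, mem_closedBall.mpr hvR.le⟩, ?_⟩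
  · rw [hseg]
    exact ⟨1, ⟨zero_le_one, ht.le⟩, by simp⟩
  · rintro ⟨-, q, hq, hqρ⟩
    rw [hseg] at hq
    obtain ⟨s, -, rfl⟩ := hq
    exact (mem_closedBall.mp hqρ).not_gt (hρ.trans_le (htangent s))

end SphericalProjection

theorem stmt2_general (d : ℕ) (hd : 2 ≤ d) (r : ℝ)
    (OK OL : EuclideanSpace ℝ (Fin d)) (rK rL : ℝ) (hrK : 0 < rK) (hrL : 0 < rL)
    (K L : Set (EuclideanSpace ℝ (Fin d)))
    (hK : K = closedBall OK rK) (hL : L = closedBall OL rL)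
    (hKr : K ⊆ ball 0 r) (hLr : L ⊆ ball 0 r)
    (z : EuclideanSpace ℝ (Fin d)) (hz : ‖z‖ = r)
    (hline : Collinear ℝ ({z, OK, OL} : Set (EuclideanSpace ℝ (Fin d))))
    (hrad : rL < rK) (hdist : dist z OK ≤ dist z OL) :
    sphProj r L z ⊂ sphProj r K z ∧
      ¬ ∃ φ : EuclideanSpace ℝ (Fin d) ≃ₗᵢ[ℝ] EuclideanSpace ℝ (Fin d),
          φ '' sphProj r K z = sphProj r L z := by
  subst hK hL
  have hOK : ‖OK‖ < r := mem_ball_zero_iff.mp (hKr (mem_closedBall_self hrK.le))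
  have hOL : ‖OL‖ < r := mem_ball_zero_iff.mp (hLr (mem_closedBall_self hrL.le))
  obtain ⟨c, rfl⟩ : ∃ c : ℝ, lineMap z OK c = OL := mem_affineSpan_pair_iff_exists_lineMap_eq.mp
    (hline.mem_affineSpan_of_mem_of_ne (by simp) (by simp) (by simp)
      (by rintro rfl; simp [hz] at hOK))
  have hc := one_le_of_norm_lineMap_lt hz hOK hOL hdist
  have hLK := sphProj_closedBall_lineMap_subset (r := r) (z := z) (O := OK) (ρ := rL) hc
  have hρ : rL / c < rK := (div_le_self hrL.le hc).trans_lt hrad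
  obtain ⟨x, hxK, hxL⟩ := exists_mem_sphProj_notMem_sphProj hd hz hrK.le hρ hKr
  have hssub : sphProj r (closedBall (lineMap z OK c) rL) z ⊂ sphProj r (closedBall OK rK) z :=
    ⟨hLK.trans (sphProj_mono (closedBall_subset_closedBall hρ.le)), fun h => hxL (hLK (h hxK))⟩
  refine ⟨hssub, fun ⟨φ, hφ⟩ => hssub.ne ?_⟩
  rw [← hφ]
  exact φ.isometry.image_eq_self_of_isCompact (isCompact_sphProj isClosed_closedBall)
    (hφ ▸ hssub.subset)

theorem stmt2 (d : ℕ) (hd : 2 ≤ d) (r : ℝ) (hr : 0 < r)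
    (OK OL : EuclideanSpace ℝ (Fin d)) (rK rL : ℝ) (hrK : 0 < rK) (hrL : 0 < rL)
    (K L : Set (EuclideanSpace ℝ (Fin d)))
    (hK : K = closedBall OK rK) (hL : L = closedBall OL rL)
    (hKr : K ⊆ ball 0 r) (hLr : L ⊆ ball 0 r)
    (z : EuclideanSpace ℝ (Fin d)) (hz : ‖z‖ = r)
    (hline : Collinear ℝ ({z, OK, OL} : Set (EuclideanSpace ℝ (Fin d))))
    (hrad : rL < rK) (hdist : dist z OK ≤ dist z OL) :
    sphProj r L z ⊂ sphProj r K z ∧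
      ¬ ∃ φ : EuclideanSpace ℝ (Fin d) ≃ₗᵢ[ℝ] EuclideanSpace ℝ (Fin d),
          φ '' sphProj r K z = sphProj r L z :=
  stmt2_general d hd r OK OL rK rL hrK hrL K L hK hL hKr hLr z hz hline hrad hdist
end

section
/- Let x, y, p, q ∈ ℝ^d with |x|, |y|, |p|, |q| < r, x ≠ y, and p ≠ q. Define angle functions α₁(z) = ∠xzy and α₂(z) = ∠pzq for z ∈ rS^{d-1} (the angle at vertex z in the triangles xzy and pzq respectively). If α₁(z) = α₂(z) for all z ∈ rS^{d-1}, then {x, y} = {p, q} as sets. -/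
open Metric Set EuclideanGeometry RealInnerProductSpace

lemma sq_pos_of_abs {l r : ℝ} (h1 : -r < l) (h2 : l < r) : 0 < r^2 - l^2 := by nlinarith

lemma quad_vanish {a b c : ℝ} {S : Set ℝ} (hS : S.Infinite)
    (h : ∀ t ∈ S, a*t^2 + b*t + c = 0) : a = 0 ∧ b = 0 ∧ c = 0 := by
  obtain ⟨t1, ht1S, -⟩ := hS.exists_notMem_finset ∅
  obtain ⟨t2, ht2S, ht2⟩ := hS.exists_notMem_finset {t1}
  obtain ⟨t3, ht3S, ht3⟩ := hS.exists_notMem_finset {t1, t2}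
  simp [Finset.mem_insert] at ht2 ht3
  obtain ⟨h31, h32⟩ := ht3
  have e1 := h t1 ht1S
  have e2 := h t2 ht2S
  have e3 := h t3 ht3S
  have h12 : a*(t1+t2)+b = 0 := by
    have h0 : (t1 - t2) * (a*(t1+t2)+b) = 0 := by linear_combination e1 - e2
    rcases mul_eq_zero.1 h0 with h0 | h0
    · exact absurd (by linarith : t1 = t2) (Ne.symm ht2)
    · exact h0
  have h13 : a*(t1+t3)+b = 0 := by
    have h0 : (t1 - t3) * (a*(t1+t3)+b) = 0 := by linear_combination e1 - e3
    rcases mul_eq_zero.1 h0 with h0 | h0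
    · exact absurd (by linarith : t3 = t1) h31
    · exact h0
  have ha : a = 0 := by
    have h0 : a * (t2 - t3) = 0 := by linear_combination h12 - h13
    rcases mul_eq_zero.1 h0 with h0 | h0
    · exact h0
    · exact absurd (by linarith : t3 = t2) h32
  refine ⟨ha, ?_, ?_⟩
  · linear_combination h12 - (t1+t2) * ha
  · linear_combination e1 - t1^2 * ha - t1 * (h12 - (t1+t2)*ha)

lemma scalar_final (r γ xi eta pp qq d : ℝ)
    (hbx : xi^2 + γ^2 < r^2) (hby : eta^2 + γ^2 < r^2)
    (hbp : pp^2 + γ^2 < r^2) (hbq : qq^2 + γ^2 < r^2)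
    (hne : xi ≠ eta) (hne2 : pp ≠ qq)
    (hd : d = eta - xi ∨ d = xi - eta)
    (hA : (xi+eta)*(qq-pp) = (pp+qq)*d)
    (hB : (xi*eta+r^2+γ^2)*(qq-pp) = (pp*qq+r^2+γ^2)*d)
    (hC : γ*((qq-pp) - d) = 0) :
    (pp = xi ∧ qq = eta) ∨ (pp = eta ∧ qq = xi) := by
  have hdne : d ≠ 0 := by
    rcases hd with h | h <;> subst h <;> simp [sub_ne_zero] <;> tauto
  have hD2ne : qq - pp ≠ 0 := sub_ne_zero.mpr (Ne.symm hne2)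
  have hfin : qq - pp = d → (pp = xi ∧ qq = eta) ∨ (pp = eta ∧ qq = xi) := by
    intro hDd
    have hsum : xi + eta = pp + qq := by
      have h0 : (xi+eta)*(qq-pp) = (pp+qq)*(qq-pp) := by linear_combination hA - (pp+qq)*hDd
      exact mul_right_cancel₀ hD2ne h0
    rcases hd with h | h
    · left; constructor <;> [nlinarith [hDd, h]; nlinarith [hDd, h]]
    · right; constructor <;> [nlinarith [hDd, h]; nlinarith [hDd, h]]
  rcases eq_or_ne γ 0 with hγ | hγ
  · subst hγ
    have key : ((qq-pp) - d)*(xi*eta*(qq-pp) - d*r^2) = 0 := by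
      rcases hd with h | h <;> subst h <;>
        [linear_combination ((xi+eta)*(qq-pp)+(pp+qq)*(eta-xi))/4 * hA - (eta-xi)*hB;
         linear_combination ((xi+eta)*(qq-pp)+(pp+qq)*(xi-eta))/4 * hA - (xi-eta)*hB]
    rcases mul_eq_zero.1 key with h0 | h0
    · exact hfin (by linarith)
    · exfalso
      have h0' : xi*eta*(qq-pp) = d*r^2 := by linarith
      have hK2 : pp*qq*d = r^2*(qq-pp) := by linear_combination h0' - hB
      have hr2 : (0:ℝ) < r^2 := by nlinarith [sq_nonneg xi]
      have hm : (xi*eta*(pp*qq))*((qq-pp)*d) = (r^2*r^2)*((qq-pp)*d) := by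
        linear_combination (pp*qq*d)*h0' + (r^2*d)*hK2
      have hfour : xi*eta*(pp*qq) = r^2*r^2 :=
        mul_right_cancel₀ (mul_ne_zero hD2ne hdne) hm
      have h1 : (xi*eta)^2 < (r^2)^2 := by nlinarith [sq_nonneg xi, sq_nonneg eta]
      have h2 : (pp*qq)^2 < (r^2)^2 := by nlinarith [sq_nonneg pp, sq_nonneg qq]
      nlinarith [hfour, h1, h2, sq_nonneg (xi*eta), sq_nonneg (pp*qq), hr2]
  · rcases mul_eq_zero.1 hC with h0 | h0
    · exact absurd h0 hγ
    · exact hfin (by linarith)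

lemma exists_unit_orth {d : ℕ} (hd : 2 ≤ d) (u : EuclideanSpace ℝ (Fin d)) :
    ∃ e : EuclideanSpace ℝ (Fin d), ‖e‖ = 1 ∧ ⟪u, e⟫ = 0 := by
  have hrk : Module.finrank ℝ (EuclideanSpace ℝ (Fin d)) = d := finrank_euclideanSpace_fin
  have hne : (ℝ ∙ u)ᗮ ≠ ⊥ := by
    intro h
    rw [Submodule.orthogonal_eq_bot_iff] at h
    rcases eq_or_ne u 0 with hu | hu
    · rw [hu, Submodule.span_zero_singleton] at h
      have h0 : Module.finrank ℝ (⊥ : Submodule ℝ (EuclideanSpace ℝ (Fin d))) = d := by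
        rw [h, finrank_top, hrk]
      rw [finrank_bot] at h0
      omega
    · have h1 : Module.finrank ℝ (ℝ ∙ u) = 1 := finrank_span_singleton hu
      rw [h] at h1
      rw [finrank_top, hrk] at h1
      omega
  obtain ⟨w, hw, hw0⟩ := Submodule.exists_mem_ne_zero_of_ne_bot hne
  refine ⟨(‖w‖⁻¹ : ℝ) • w, ?_, ?_⟩
  · rw [norm_smul, norm_inv, norm_norm, inv_mul_cancel₀ (norm_ne_zero_iff.mpr hw0)]
  · have h5 := (Submodule.mem_orthogonal _ w).1 hw u (Submodule.mem_span_singleton_self u)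
    rw [real_inner_smul_right, h5, mul_zero]

lemma inner_comb {d : ℕ} {u e : EuclideanSpace ℝ (Fin d)}
    (hu : ‖u‖ = 1) (he : ‖e‖ = 1) (hue : ⟪u, e⟫ = 0) (a b a' b' : ℝ) :
    ⟪a•u + b•e, a'•u + b'•e⟫ = a*a' + b*b' := by
  have h1 : ⟪u, u⟫ = (1:ℝ) := by rw [real_inner_self_eq_norm_sq, hu]; norm_num
  have h2 : ⟪e, e⟫ = (1:ℝ) := by rw [real_inner_self_eq_norm_sq, he]; norm_num
  have h3 : ⟪e, u⟫ = (0:ℝ) := by rw [real_inner_comm]; exact hue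
  simp only [inner_add_left, inner_add_right, real_inner_smul_left,
    real_inner_smul_right, h1, h2, h3, hue]
  ring

lemma key_identity (xi eta PP QQ γ r l m sg : ℝ)
    (hsg : sg = γ + m) (hm2 : m^2 = r^2 - l^2) (hσ : sg ≠ 0)
    (E : ((xi-l)*(eta-l)+sg^2)^2 * (((PP-l)^2+sg^2) * ((QQ-l)^2+sg^2))
       = ((PP-l)*(QQ-l)+sg^2)^2 * (((xi-l)^2+sg^2) * ((eta-l)^2+sg^2))) :
    ((-(xi+eta)*(QQ-PP) + (PP+QQ)*(eta-xi))*l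
      + ((xi*eta+γ^2+r^2)*(QQ-PP) - (PP*QQ+γ^2+r^2)*(eta-xi)) + 2*γ*((QQ-PP) - (eta-xi))*m)
    * ((-(xi+eta)*(QQ-PP) - (PP+QQ)*(eta-xi))*l
      + ((xi*eta+γ^2+r^2)*(QQ-PP) + (PP*QQ+γ^2+r^2)*(eta-xi)) + 2*γ*((QQ-PP) + (eta-xi))*m) = 0 := by
  subst hsg
  set f := (xi-l)*(eta-l)+(γ+m)^2 with hf
  set g := (PP-l)*(QQ-l)+(γ+m)^2 with hg
  have h9 : (γ+m)^2 * ((f*(QQ-PP) - g*(eta-xi)) * (f*(QQ-PP) + g*(eta-xi))) = 0 := by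
    linear_combination E
  have hF : (f*(QQ-PP) - g*(eta-xi)) * (f*(QQ-PP) + g*(eta-xi)) = 0 :=
    (mul_eq_zero.1 h9).resolve_left (pow_ne_zero 2 hσ)
  linear_combination hF +
    (-(f*(QQ-PP) - g*(eta-xi))*((QQ-PP)+(eta-xi)) - (f*(QQ-PP) + g*(eta-xi))*((QQ-PP)-(eta-xi))
      + ((QQ-PP)^2 - (eta-xi)^2)*(m^2 - r^2 + l^2)) * hm2

set_option maxHeartbeats 1600000 in
theorem stmt4 (d : ℕ) (hd : 2 ≤ d) (r : ℝ) (hr : 0 < r)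
    (x y p q : EuclideanSpace ℝ (Fin d))
    (hx : ‖x‖ < r) (hy : ‖y‖ < r) (hp : ‖p‖ < r) (hq : ‖q‖ < r)
    (hxy : x ≠ y) (hpq : p ≠ q)
    (hangle : ∀ z : EuclideanSpace ℝ (Fin d), ‖z‖ = r → ∠ x z y = ∠ p z q) :
    ({x, y} : Set (EuclideanSpace ℝ (Fin d))) = {p, q} := by
  classical
  set v : EuclideanSpace ℝ (Fin d) := y - x with hvdef
  have hvne : v ≠ 0 := sub_ne_zero.mpr (Ne.symm hxy)
  have hA'pos : (0:ℝ) < ‖v‖^2 := by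
    have := norm_pos_iff.mpr hvne
    positivity
  have hxr2 : ‖x‖^2 < r^2 := by nlinarith [norm_nonneg x]
  have hyr2 : ‖y‖^2 < r^2 := by nlinarith [norm_nonneg y]
  have hpr2 : ‖p‖^2 < r^2 := by nlinarith [norm_nonneg p]
  have hqr2 : ‖q‖^2 < r^2 := by nlinarith [norm_nonneg q]
  set B' : ℝ := ⟪x, v⟫ with hB'def
  set Δ : ℝ := B'^2 - ‖v‖^2*(‖x‖^2 - r^2) with hΔdef
  have hΔpos : 0 < Δ := by nlinarith [sq_nonneg B']
  set sΔ := Real.sqrt Δ with hsΔdef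
  have hsΔ2 : sΔ^2 = Δ := Real.sq_sqrt hΔpos.le
  have hsΔpos : 0 < sΔ := Real.sqrt_pos.mpr hΔpos
  set t₁ : ℝ := (-B' - sΔ)/‖v‖^2 with ht₁def
  set t₂ : ℝ := (-B' + sΔ)/‖v‖^2 with ht₂def
  have hnorm : ∀ t : ℝ, ‖x + t • v‖^2 = ‖v‖^2*t^2 + 2*B'*t + ‖x‖^2 := by
    intro t
    rw [norm_add_sq_real, real_inner_smul_right, norm_smul, mul_pow, Real.norm_eq_abs, sq_abs]
    ring
  have hxyv : x + v = y := by rw [hvdef]; abel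
  have hyquad : ‖v‖^2 + 2*B' + ‖x‖^2 < r^2 := by
    have h1 := hnorm 1
    rw [one_smul, hxyv] at h1
    nlinarith
  have hsB : 0 < sΔ + B' := by nlinarith [hsΔ2, hsΔpos, hΔpos]
  have hsB2 : ‖v‖^2 + B' < sΔ := by nlinarith [hsΔ2, hsΔpos]
  have ht₁0 : t₁ < 0 := div_neg_of_neg_of_pos (by linarith) hA'pos
  have ht₂1 : 1 < t₂ := by
    rw [ht₂def, lt_div_iff₀ hA'pos]
    linarith
  have hroot : ∀ t : ℝ, ‖v‖^2*t^2 + 2*B'*t + (‖x‖^2 - r^2) = 0 → ‖x + t•v‖ = r := by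
    intro t ht
    have h2 : ‖x + t•v‖^2 = r^2 := by rw [hnorm t]; linarith
    rw [← Real.sqrt_sq (norm_nonneg _), h2, Real.sqrt_sq hr.le]
  have hvne2 : ‖v‖^2 ≠ 0 := ne_of_gt hA'pos
  have hsΔ2' : sΔ^2 = B'^2 - ‖v‖^2*(‖x‖^2 - r^2) := hsΔ2.trans hΔdef
  have hra : ‖x + t₁•v‖ = r := by
    apply hroot
    have h1 : ‖v‖^2 * t₁ = -B' - sΔ := by rw [ht₁def]; field_simp
    have h2 : ‖v‖^2 * (‖v‖^2*t₁^2 + 2*B'*t₁ + (‖x‖^2 - r^2)) = 0 := by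
      linear_combination (‖v‖^2*t₁ + B' - sΔ)*h1 + hsΔ2'
    exact (mul_eq_zero.1 h2).resolve_left hvne2
  have hrb : ‖x + t₂•v‖ = r := by
    apply hroot
    have h1 : ‖v‖^2 * t₂ = -B' + sΔ := by rw [ht₂def]; field_simp
    have h2 : ‖v‖^2 * (‖v‖^2*t₂^2 + 2*B'*t₂ + (‖x‖^2 - r^2)) = 0 := by
      linear_combination (‖v‖^2*t₂ + B' + sΔ)*h1 + hsΔ2'
    exact (mul_eq_zero.1 h2).resolve_left hvne2
  -- zero angle at sphere points on the line xy
  have hangzero : ∀ t : ℝ, (t < 0 ∨ 1 < t) → ‖x + t•v‖ = r →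
      InnerProductGeometry.angle (p - (x+t•v)) (q - (x+t•v)) = 0 := by
    intro t ht hnr
    have h1 := hangle _ hnr
    have hxa : x - (x + t•v) = (-t)•v := by module
    have hya : y - (x + t•v) = (1-t)•v := by rw [← hxyv]; module
    have h2 : InnerProductGeometry.angle (x - (x+t•v)) (y - (x+t•v)) = 0 := by
      rw [hxa, hya]
      rcases ht with ht | ht
      · rw [InnerProductGeometry.angle_smul_left_of_pos _ _ (by linarith : (0:ℝ) < -t),
            InnerProductGeometry.angle_smul_right_of_pos _ _ (by linarith : (0:ℝ) < 1-t)]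
        exact InnerProductGeometry.angle_self hvne
      · rw [show (-t)•v = -(t•v) by module, show (1-t)•v = -((t-1)•v) by module,
            InnerProductGeometry.angle_neg_neg,
            InnerProductGeometry.angle_smul_left_of_pos _ _ (by linarith : (0:ℝ) < t),
            InnerProductGeometry.angle_smul_right_of_pos _ _ (by linarith : (0:ℝ) < t-1)]
        exact InnerProductGeometry.angle_self hvne
    have h3 : ∠ p (x+t•v) q = 0 := by
      rw [← h1]
      simp only [EuclideanGeometry.angle, vsub_eq_sub]
      exact h2
    simp only [EuclideanGeometry.angle, vsub_eq_sub] at h3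
    exact h3
  obtain ⟨hpa, ρ₁, hρ₁, hq1⟩ :=
    InnerProductGeometry.angle_eq_zero_iff.1 (hangzero t₁ (Or.inl ht₁0) hra)
  obtain ⟨hpb, ρ₂, hρ₂, hq2⟩ :=
    InnerProductGeometry.angle_eq_zero_iff.1 (hangzero t₂ (Or.inr ht₂1) hrb)
  have ht12 : t₁ < t₂ := by linarith
  have hρne : ρ₁ ≠ ρ₂ := by
    intro h
    have h6 : ((x + t₂•v) - (x + t₁•v)) - ρ₁ • ((x + t₂•v) - (x + t₁•v))
        = ((q - (x + t₁•v)) - ρ₁•(p - (x + t₁•v))) - ((q - (x + t₂•v)) - ρ₂•(p - (x + t₂•v))) := by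
      rw [h]; module
    rw [sub_eq_zero.mpr hq1, sub_eq_zero.mpr hq2, sub_zero] at h6
    have h5 : ((1 - ρ₁) * (t₂ - t₁)) • v = 0 := by
      have h7 : ((1 - ρ₁) * (t₂ - t₁)) • v
          = ((x + t₂•v) - (x + t₁•v)) - ρ₁ • ((x + t₂•v) - (x + t₁•v)) := by module
      rw [h7, h6]
    rcases smul_eq_zero.1 h5 with h7 | h7
    · rcases mul_eq_zero.1 h7 with h8 | h8
      · have hρ1 : ρ₁ = 1 := by linarith
        rw [hρ1, one_smul] at hq1
        apply hpq
        have h9 := congrArg (· + (x + t₁•v)) hq1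
        simp only [sub_add_cancel] at h9
        exact h9.symm
      · linarith
    · exact hvne h7
  have hρsub : ρ₁ - ρ₂ ≠ 0 := sub_ne_zero.mpr hρne
  set P := (ρ₁-ρ₂)⁻¹ * ((ρ₁-1)*t₁ + (1-ρ₂)*t₂) with hPdef
  have hpP : p = x + P • v := by
    have h4 : ρ₁•(p - (x+t₁•v)) - ρ₂•(p - (x+t₂•v)) = (x+t₂•v) - (x+t₁•v) := by
      rw [← hq1, ← hq2]; module
    have h5 : (ρ₁ - ρ₂) • p = (ρ₁ - ρ₂) • x + ((ρ₁-1)*t₁ + (1-ρ₂)*t₂) • v := by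
      linear_combination (norm := module) h4
    calc p = (ρ₁-ρ₂)⁻¹ • ((ρ₁-ρ₂) • p) := (inv_smul_smul₀ hρsub p).symm
      _ = x + P • v := by
          rw [h5, smul_add, smul_smul, smul_smul, inv_mul_cancel₀ hρsub, one_smul, hPdef]
  set Q := t₁ + ρ₁*(P - t₁) with hQdef
  have hqQ : q = x + Q • v := by
    have h6 : q = (x + t₁•v) + ρ₁ • (p - (x + t₁•v)) := by rw [← hq1]; abel
    rw [h6, hpP, hQdef]; module
  -- coordinates along the line
  set u : EuclideanSpace ℝ (Fin d) := (‖v‖⁻¹ : ℝ) • v with hudef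
  have hu1 : ‖u‖ = 1 := norm_smul_inv_norm hvne
  have hvnorm : ‖v‖ ≠ 0 := norm_ne_zero_iff.mpr hvne
  have hvu : v = ‖v‖ • u := by
    rw [hudef, smul_smul, mul_inv_cancel₀ hvnorm, one_smul]
  set ξ : ℝ := ⟪x, u⟫ with hξdef
  set w : EuclideanSpace ℝ (Fin d) := x - ξ • u with hwdef
  have hwu : ⟪u, w⟫ = (0:ℝ) := by
    rw [hwdef, inner_sub_right, real_inner_smul_right]
    have huu : ⟪u, u⟫ = (1:ℝ) := by rw [real_inner_self_eq_norm_sq, hu1]; norm_num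
    rw [huu, mul_one, real_inner_comm]
    exact sub_self _
  set γ := ‖w‖ with hγdef
  have hγ0 : 0 ≤ γ := norm_nonneg w
  obtain ⟨e, he1, he2, hxe⟩ :
      ∃ e : EuclideanSpace ℝ (Fin d), ‖e‖ = 1 ∧ ⟪u, e⟫ = (0:ℝ) ∧ x = ξ•u + γ•e := by
    rcases eq_or_ne w 0 with hw | hw
    · obtain ⟨e, he1, he2⟩ := exists_unit_orth hd u
      refine ⟨e, he1, he2, ?_⟩
      have hγz : γ = 0 := by rw [hγdef, hw, norm_zero]
      rw [hγz, zero_smul, add_zero]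
      have : x - ξ • u = 0 := by rw [← hwdef, hw]
      linear_combination (norm := module) this
    · refine ⟨(‖w‖⁻¹:ℝ)•w, norm_smul_inv_norm hw, ?_, ?_⟩
      · rw [real_inner_smul_right, hwu, mul_zero]
      · have hcomp : γ • ((‖w‖⁻¹:ℝ) • w) = w := by
          rw [smul_smul, hγdef, mul_inv_cancel₀ (norm_ne_zero_iff.mpr hw), one_smul]
        rw [hcomp, hwdef]
        abel
  set eta : ℝ := ξ + ‖v‖ with hetadef
  set PP : ℝ := ξ + P*‖v‖ with hPPdef
  set QQ : ℝ := ξ + Q*‖v‖ with hQQdef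
  have hye : y = eta•u + γ•e := by
    rw [← hxyv, hxe, hvu, hetadef]; module
  have hpe : p = PP•u + γ•e := by rw [hpP, hxe, hvu, hPPdef]; module
  have hqe : q = QQ•u + γ•e := by rw [hqQ, hxe, hvu, hQQdef]; module
  have hnormsq : ∀ (c : ℝ) (z0 : EuclideanSpace ℝ (Fin d)), z0 = c•u + γ•e →
      ‖z0‖^2 = c^2 + γ^2 := by
    intro c z0 hz0
    rw [← real_inner_self_eq_norm_sq, hz0, inner_comb hu1 he1 he2]
    ring
  have hbx : ξ^2 + γ^2 < r^2 := by
    have h1 := hnormsq ξ x hxe; linarith [h1, hxr2]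
  have hby : eta^2 + γ^2 < r^2 := by
    have h1 := hnormsq eta y hye; linarith [h1, hyr2]
  have hbp : PP^2 + γ^2 < r^2 := by
    have h1 := hnormsq PP p hpe; linarith [h1, hpr2]
  have hbq : QQ^2 + γ^2 < r^2 := by
    have h1 := hnormsq QQ q hqe; linarith [h1, hqr2]
  have hvpos : 0 < ‖v‖ := norm_pos_iff.mpr hvne
  have hξeta : ξ ≠ eta := by rw [hetadef]; intro h; linarith [hvpos]
  have hPPQQ : PP ≠ QQ := by
    intro h
    exact hpq (by rw [hpe, hqe, h])
  -- the key equation on the sphere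
  have key : ∀ l ∈ Set.Ioo (-r) r,
      ((-(ξ+eta)*(QQ-PP) + (PP+QQ)*(eta-ξ))*l
        + ((ξ*eta+γ^2+r^2)*(QQ-PP) - (PP*QQ+γ^2+r^2)*(eta-ξ))
        + 2*γ*((QQ-PP) - (eta-ξ))*Real.sqrt (r^2 - l^2))
      * ((-(ξ+eta)*(QQ-PP) - (PP+QQ)*(eta-ξ))*l
        + ((ξ*eta+γ^2+r^2)*(QQ-PP) + (PP*QQ+γ^2+r^2)*(eta-ξ))
        + 2*γ*((QQ-PP) + (eta-ξ))*Real.sqrt (r^2 - l^2)) = 0 := by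
    intro l hl
    obtain ⟨hl1, hl2⟩ := hl
    have hrl : 0 < r^2 - l^2 := sq_pos_of_abs hl1 hl2
    set m := Real.sqrt (r^2 - l^2) with hmdef
    have hm2 : m^2 = r^2 - l^2 := Real.sq_sqrt hrl.le
    have hmpos : 0 < m := Real.sqrt_pos.mpr hrl
    set z : EuclideanSpace ℝ (Fin d) := l•u + (-m)•e with hzdef
    have hz2 : ‖z‖^2 = r^2 := by
      rw [← real_inner_self_eq_norm_sq, hzdef, inner_comb hu1 he1 he2]
      linear_combination hm2
    have hzr : ‖z‖ = r := by
      rw [← Real.sqrt_sq (norm_nonneg z), hz2, Real.sqrt_sq hr.le]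
    have hang := hangle z hzr
    have hsub : ∀ (c : ℝ) (z0 : EuclideanSpace ℝ (Fin d)), z0 = c•u + γ•e →
        z0 - z = (c - l)•u + (γ + m)•e := by
      intro c z0 h
      rw [h, hzdef]; module
    set sg := γ + m with hsgdef
    have hsgpos : 0 < sg := by rw [hsgdef]; linarith
    have hIxy : ⟪x - z, y - z⟫ = (ξ - l)*(eta - l) + sg^2 := by
      rw [hsub ξ x hxe, hsub eta y hye, inner_comb hu1 he1 he2]; ring
    have hIpq : ⟪p - z, q - z⟫ = (PP - l)*(QQ - l) + sg^2 := by
      rw [hsub PP p hpe, hsub QQ q hqe, inner_comb hu1 he1 he2]; ring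
    have hNx : ‖x - z‖^2 = (ξ - l)^2 + sg^2 := by
      rw [← real_inner_self_eq_norm_sq, hsub ξ x hxe, inner_comb hu1 he1 he2]; ring
    have hNy : ‖y - z‖^2 = (eta - l)^2 + sg^2 := by
      rw [← real_inner_self_eq_norm_sq, hsub eta y hye, inner_comb hu1 he1 he2]; ring
    have hNp : ‖p - z‖^2 = (PP - l)^2 + sg^2 := by
      rw [← real_inner_self_eq_norm_sq, hsub PP p hpe, inner_comb hu1 he1 he2]; ring
    have hNq : ‖q - z‖^2 = (QQ - l)^2 + sg^2 := by
      rw [← real_inner_self_eq_norm_sq, hsub QQ q hqe, inner_comb hu1 he1 he2]; ring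
    have hxz : x ≠ z := by intro h; rw [h, hzr] at hx; exact lt_irrefl r hx
    have hyz : y ≠ z := by intro h; rw [h, hzr] at hy; exact lt_irrefl r hy
    have hpz : p ≠ z := by intro h; rw [h, hzr] at hp; exact lt_irrefl r hp
    have hqz : q ≠ z := by intro h; rw [h, hzr] at hq; exact lt_irrefl r hq
    have hNxp : 0 < ‖x - z‖ := by rw [norm_pos_iff]; exact sub_ne_zero.mpr hxz
    have hNyp : 0 < ‖y - z‖ := by rw [norm_pos_iff]; exact sub_ne_zero.mpr hyz
    have hNpp : 0 < ‖p - z‖ := by rw [norm_pos_iff]; exact sub_ne_zero.mpr hpz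
    have hNqp : 0 < ‖q - z‖ := by rw [norm_pos_iff]; exact sub_ne_zero.mpr hqz
    have hcos : ⟪x-z, y-z⟫/(‖x-z‖*‖y-z‖) = ⟪p-z,q-z⟫/(‖p-z‖*‖q-z‖) := by
      have h1 : InnerProductGeometry.angle (x - z) (y - z)
          = InnerProductGeometry.angle (p - z) (q - z) := by
        simpa [EuclideanGeometry.angle, vsub_eq_sub] using hang
      have h2 := congrArg Real.cos h1
      rwa [InnerProductGeometry.cos_angle, InnerProductGeometry.cos_angle] at h2
    have hcross := (div_eq_div_iff (by positivity) (by positivity)).1 hcos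
    have hEsq : ⟪x-z,y-z⟫^2 * (‖p-z‖^2 * ‖q-z‖^2) = ⟪p-z,q-z⟫^2 * (‖x-z‖^2 * ‖y-z‖^2) := by
      linear_combination (⟪x-z,y-z⟫*(‖p-z‖*‖q-z‖) + ⟪p-z,q-z⟫*(‖x-z‖*‖y-z‖)) * hcross
    rw [hIxy, hIpq, hNx, hNy, hNp, hNq] at hEsq
    exact key_identity ξ eta PP QQ γ r l m sg hsgdef hm2 (ne_of_gt hsgpos) hEsq
  -- from the key equation to vanishing coefficients
  have habc : ((-(ξ+eta)*(QQ-PP) + (PP+QQ)*(eta-ξ)) = 0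
        ∧ ((ξ*eta+γ^2+r^2)*(QQ-PP) - (PP*QQ+γ^2+r^2)*(eta-ξ)) = 0
        ∧ 2*γ*((QQ-PP) - (eta-ξ)) = 0)
      ∨ ((-(ξ+eta)*(QQ-PP) - (PP+QQ)*(eta-ξ)) = 0
        ∧ ((ξ*eta+γ^2+r^2)*(QQ-PP) + (PP*QQ+γ^2+r^2)*(eta-ξ)) = 0
        ∧ 2*γ*((QQ-PP) + (eta-ξ)) = 0) := by
    set A₁ := -(ξ+eta)*(QQ-PP) + (PP+QQ)*(eta-ξ) with hA₁
    set B₁ := (ξ*eta+γ^2+r^2)*(QQ-PP) - (PP*QQ+γ^2+r^2)*(eta-ξ) with hB₁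
    set C₁ := 2*γ*((QQ-PP) - (eta-ξ)) with hC₁
    set A₂ := -(ξ+eta)*(QQ-PP) - (PP+QQ)*(eta-ξ) with hA₂
    set B₂ := (ξ*eta+γ^2+r^2)*(QQ-PP) + (PP*QQ+γ^2+r^2)*(eta-ξ) with hB₂
    set C₂ := 2*γ*((QQ-PP) + (eta-ξ)) with hC₂
    have hcover : Set.Ioo (-r) r ⊆
        {l | l ∈ Set.Ioo (-r) r ∧ A₁*l + B₁ + C₁*Real.sqrt (r^2 - l^2) = 0}
        ∪ {l | l ∈ Set.Ioo (-r) r ∧ A₂*l + B₂ + C₂*Real.sqrt (r^2 - l^2) = 0} := by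
      intro l hl
      rcases mul_eq_zero.1 (key l hl) with h | h
      · exact Or.inl ⟨hl, h⟩
      · exact Or.inr ⟨hl, h⟩
    have hinf := (Set.Ioo_infinite (by linarith : -r < r)).mono hcover
    have hquad : ∀ (A B C : ℝ),
        {l | l ∈ Set.Ioo (-r) r ∧ A*l + B + C*Real.sqrt (r^2 - l^2) = 0}.Infinite →
        A = 0 ∧ B = 0 ∧ C = 0 := by
      intro A B C hS
      have hq := quad_vanish (a := A^2+C^2) (b := 2*A*B) (c := B^2 - C^2*r^2) hS ?_
      · obtain ⟨h1, h2, h3⟩ := hq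
        have hA0 : A = 0 := by
          have h4 : A^2 = 0 := by linarith [sq_nonneg A, sq_nonneg C]
          exact pow_eq_zero_iff two_ne_zero |>.1 h4
        have hC0 : C = 0 := by
          have h4 : C^2 = 0 := by linarith [sq_nonneg A, sq_nonneg C]
          exact pow_eq_zero_iff two_ne_zero |>.1 h4
        have hB0 : B = 0 := by
          rw [hC0] at h3
          have h4 : B^2 = 0 := by linarith [h3, sq_nonneg B]
          exact pow_eq_zero_iff two_ne_zero |>.1 h4
        exact ⟨hA0, hB0, hC0⟩
      · intro t ht
        obtain ⟨⟨ht1, ht2⟩, hteq⟩ := ht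
        have hm2 : (Real.sqrt (r^2 - t^2))^2 = r^2 - t^2 :=
          Real.sq_sqrt (sq_pos_of_abs ht1 ht2).le
        linear_combination (A*t + B - C*Real.sqrt (r^2-t^2))*hteq + C^2*hm2
    rcases Set.infinite_union.1 hinf with h | h
    · exact Or.inl (hquad A₁ B₁ C₁ h)
    · exact Or.inr (hquad A₂ B₂ C₂ h)
  -- conclude
  have hfinal : (PP = ξ ∧ QQ = eta) ∨ (PP = eta ∧ QQ = ξ) := by
    rcases habc with ⟨h1, h2, h3⟩ | ⟨h1, h2, h3⟩
    · exact scalar_final r γ ξ eta PP QQ (eta - ξ) hbx hby hbp hbq hξeta hPPQQ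
        (Or.inl rfl) (by linear_combination -h1) (by linear_combination h2)
        (by linear_combination h3/2)
    · exact scalar_final r γ ξ eta PP QQ (ξ - eta) hbx hby hbp hbq hξeta hPPQQ
        (Or.inr rfl) (by linear_combination -h1) (by linear_combination h2)
        (by linear_combination h3/2)
  rcases hfinal with ⟨h1, h2⟩ | ⟨h1, h2⟩
  · have hpx : p = x := by rw [hpe, hxe, h1]
    have hqy : q = y := by rw [hqe, hye, h2]
    rw [hpx, hqy]
  · have hpy : p = y := by rw [hpe, hye, h1]
    have hqx : q = x := by rw [hqe, hxe, h2]
    rw [hpy, hqx]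
    exact Set.pair_comm x y
end

section
/- Let x, y, p, q ∈ ℝ² with |x|, |y|, |p|, |q| < r, x ≠ y, p ≠ q, all four points lying on one line ℓ. Identify ℝ² with ℂ and suppose that arg((z−y)/(z−x)) = arg((z−q)/(z−p)) (as angles subtended, i.e., ∠xzy = ∠pzq) for all z on the circle |z| = r. Then x = p and y = q, or x = q and y = p. -/
open Metric Set EuclideanGeometry Complex ComplexConjugate

/-!
Rotate the plane so that the line is horizontal, at height `e`, and write the points as
`a + e i`, `b + e i`, `c + e i`, `d + e i`. At `z = s + h i` the angle `∠xzy` has cotangent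
`((a - s)(b - s) + (e - h)²) / (|e - h| |a - b|)`, so equality of the two angles says
`((a - s)(b - s) + (e - h)²) |c - d| = ((c - s)(d - s) + (e - h)²) |a - b|`. On the circle
`s² + h² = r²` this relation is affine in `(s, h)`, and its coefficients give
`(a + b) |c - d| = (c + d) |a - b|` and `(r² + e² + a b) |c - d| = (r² + e² + c d) |a - b|`.
Since `|a b|, |c d| < r² + e²`, these force `|a - b| = |c - d|`, hence `{a, b}` and `{c, d}`
have the same sum and product.
-/

lemma re_conj_mul_eq_cos_angle_mul (u v : ℂ) :
    (conj u * v).re = Real.cos (InnerProductGeometry.angle u v) * (‖u‖ * ‖v‖) := by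
  rw [InnerProductGeometry.cos_angle_mul_norm_mul_norm, Complex.inner, mul_comm]

lemma abs_im_conj_mul_eq_sin_angle_mul (u v : ℂ) :
    |(conj u * v).im| = Real.sin (InnerProductGeometry.angle u v) * (‖u‖ * ‖v‖) := by
  set θ := InnerProductGeometry.angle u v
  have hnorm : (‖u‖ * ‖v‖) ^ 2 = (conj u * v).re ^ 2 + (conj u * v).im ^ 2 := by
    rw [← norm_conj u, ← norm_mul, Complex.sq_norm, normSq_apply]; ring
  have hcos := re_conj_mul_eq_cos_angle_mul u v
  have hsin : 0 ≤ Real.sin θ * (‖u‖ * ‖v‖) :=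
    mul_nonneg (InnerProductGeometry.sin_angle_nonneg u v) (by positivity)
  refine (sq_eq_sq₀ (abs_nonneg _) hsin).1 ?_
  rw [sq_abs]
  linear_combination -(‖u‖ * ‖v‖) ^ 2 * Real.sin_sq_add_cos_sq θ - hnorm
    - ((conj u * v).re + Real.cos θ * (‖u‖ * ‖v‖)) * hcos

lemma re_mul_abs_im_eq_of_angle_eq {u₁ v₁ u₂ v₂ : ℂ}
    (h : InnerProductGeometry.angle u₁ v₁ = InnerProductGeometry.angle u₂ v₂) :
    (conj u₁ * v₁).re * |(conj u₂ * v₂).im| = (conj u₂ * v₂).re * |(conj u₁ * v₁).im| := by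
  simp only [re_conj_mul_eq_cos_angle_mul, abs_im_conj_mul_eq_sin_angle_mul, h]
  ring

lemma angle_mul_left_eq {u : ℂ} (hu : u ≠ 0) (a b c : ℂ) : ∠ (u * a) (u * b) (u * c) = ∠ a b c := by
  simp only [EuclideanGeometry.angle, vsub_eq_sub, ← mul_sub, Complex.angle_mul_left hu]

lemma conj_sub_mul_sub_of_im_eq (a b e s h : ℝ) :
    conj (a + e * I - (s + h * I)) * (b + e * I - (s + h * I)) =
      ((a - s) * (b - s) + (e - h) ^ 2 : ℝ) + ((e - h) * (a - b) : ℝ) * I := by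
  apply Complex.ext <;>
    simp only [map_sub, map_add, map_mul, conj_ofReal, conj_I, mul_neg, mul_re, mul_im, sub_re,
      sub_im, add_re, add_im, neg_re, neg_im, ofReal_re, ofReal_im, I_re, I_im, mul_zero, mul_one,
      zero_mul, sub_self, neg_zero, add_zero, zero_add, sub_zero, sub_neg_eq_add, sq, ofReal_add,
      ofReal_mul, ofReal_sub] <;>
    ring

lemma exists_norm_eq_one_forall_im_div_eq {s : Set ℂ} (hs : Collinear ℝ s) :
    ∃ u : ℂ, ‖u‖ = 1 ∧ ∃ e : ℝ, ∀ z ∈ s, (z / u).im = e := by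
  obtain ⟨z₀, v, hv⟩ := (collinear_iff_exists_forall_eq_smul_vadd s).1 hs
  refine ⟨exp (arg v * I), norm_exp_ofReal_mul_I _, (z₀ / exp (arg v * I)).im, fun z hz => ?_⟩
  obtain ⟨t, rfl⟩ := hv z hz
  have hsmul : t • v = ((t * ‖v‖ : ℝ) : ℂ) * exp (arg v * I) := by
    rw [real_smul, ofReal_mul, mul_assoc, norm_mul_exp_arg_mul_I]
  rw [vadd_eq_add, add_div, hsmul, mul_div_cancel_right₀ _ (exp_ne_zero _), add_im, ofReal_im,
    zero_add]

lemma mul_abs_sub_eq_of_angle_eq {a b c d e s h : ℝ} (heh : e ≠ h)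
    (hangle : ∠ (a + e * I) (s + h * I) (b + e * I) = ∠ (c + e * I) (s + h * I) (d + e * I)) :
    ((a - s) * (b - s) + (e - h) ^ 2) * |c - d| = ((c - s) * (d - s) + (e - h) ^ 2) * |a - b| := by
  have H := re_mul_abs_im_eq_of_angle_eq hangle
  simp only [vsub_eq_sub, conj_sub_mul_sub_of_im_eq, add_re, ofReal_re, re_ofReal_mul, I_re,
    add_im, ofReal_im, im_ofReal_mul, I_im, mul_zero, mul_one, add_zero, zero_add,
    abs_mul] at H
  exact mul_right_cancel₀ (abs_ne_zero.2 (sub_ne_zero.2 heh)) (by linear_combination H)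

/-- Evaluating at `(0, ±r)` and `(±s₀, h₀)` isolates the coefficients of the relation, which is
affine in `(s, h)` once `s² = r² - h²` is substituted. -/
lemma add_mul_eq_and_mul_add_mul_eq {r e a b c d k l : ℝ} (her : e ^ 2 < r ^ 2)
    (H : ∀ s h : ℝ, s ^ 2 + h ^ 2 = r ^ 2 → e ≠ h →
      ((a - s) * (b - s) + (e - h) ^ 2) * k = ((c - s) * (d - s) + (e - h) ^ 2) * l) :
    (a + b) * k = (c + d) * l ∧ (r ^ 2 + e ^ 2 + a * b) * k = (r ^ 2 + e ^ 2 + c * d) * l := by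
  have hner : e ≠ r := by rintro rfl; exact lt_irrefl _ her
  have hnenr : e ≠ -r := by rintro rfl; rw [neg_sq] at her; exact lt_irrefl _ her
  set h₀ := (e - r) / 2 with hh₀
  have hh₀r : h₀ ^ 2 < r ^ 2 := by rw [hh₀]; nlinarith [sq_nonneg (e + r)]
  have heh₀ : e ≠ h₀ := fun h => hnenr (by linarith)
  set s₀ := √(r ^ 2 - h₀ ^ 2)
  have hs₀sq : s₀ ^ 2 = r ^ 2 - h₀ ^ 2 := Real.sq_sqrt (by linarith)
  have hs₀ : 0 < s₀ := Real.sqrt_pos.2 (by linarith)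
  have E₁ := H 0 r (by ring) hner
  have E₂ := H 0 (-r) (by ring) hnenr
  have E₃ := H s₀ h₀ (by linarith) heh₀
  have E₄ := H (-s₀) h₀ (by linear_combination hs₀sq) heh₀
  refine ⟨mul_left_cancel₀ (by positivity : 2 * s₀ ≠ 0) (by linear_combination E₄ - E₃), ?_⟩
  linear_combination (E₁ + E₂) / 2

lemma eq_and_eq_or_eq_and_eq_of_add_eq_of_mul_eq {a b c d : ℝ} (hs : a + b = c + d)
    (hp : a * b = c * d) : (a = c ∧ b = d) ∨ (a = d ∧ b = c) := by
  have : (c - a) * (c - b) = 0 := by linear_combination (-c) * hs + hp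
  rcases mul_eq_zero.1 this with h | h
  · exact Or.inl ⟨by linarith, by linarith⟩
  · exact Or.inr ⟨by linarith, by linarith⟩

/-- Squaring the first relation gives `a b |c - d|² = c d |a - b|²`, and with the second this
leaves `|c - d| = |a - b|` or `R |c - d| = c d |a - b|`, `R |a - b| = a b |c - d|`; the bounds
on `a b` and `c d` make the latter pair contradictory. -/
lemma abs_sub_eq_abs_sub_of_relations {R a b c d : ℝ} (hab : a ≠ b) (hcd : c ≠ d)
    (hA : |a * b| < R) (hC : |c * d| < R)
    (h₁ : (a + b) * |c - d| = (c + d) * |a - b|)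
    (h₂ : (R + a * b) * |c - d| = (R + c * d) * |a - b|) :
    |a - b| = |c - d| := by
  set D₁ := |a - b|
  set D₂ := |c - d|
  have hD₁ : 0 < D₁ := abs_pos.2 (sub_ne_zero.2 hab)
  have hD₂ : 0 < D₂ := abs_pos.2 (sub_ne_zero.2 hcd)
  have hmul : a * b * D₂ ^ 2 = c * d * D₁ ^ 2 := by
    have hsq : (a + b) ^ 2 * D₂ ^ 2 = (c + d) ^ 2 * D₁ ^ 2 := by
      linear_combination ((a + b) * D₂ + (c + d) * D₁) * h₁
    linear_combination hsq / 4 + D₂ ^ 2 / 4 * sq_abs (a - b) - D₁ ^ 2 / 4 * sq_abs (c - d)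
  by_contra hne
  have hsub : D₂ - D₁ ≠ 0 := sub_ne_zero.2 (Ne.symm hne)
  have g₁ : R * D₂ = c * d * D₁ := by
    have : (D₂ - D₁) * (R * D₂ - c * d * D₁) = 0 := by linear_combination D₂ * h₂ - hmul
    linarith [(mul_eq_zero.1 this).resolve_left hsub]
  have g₂ : R * D₁ = a * b * D₂ := by
    have : (D₂ - D₁) * (R * D₁ - a * b * D₂) = 0 := by linear_combination D₁ * h₂ - hmul
    linarith [(mul_eq_zero.1 this).resolve_left hsub]
  have l₁ : D₂ < D₁ := by nlinarith [abs_lt.1 hC]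
  have l₂ : D₁ < D₂ := by nlinarith [abs_lt.1 hA]
  linarith

lemma abs_mul_lt_of_sq_add_sq_lt {a b e r : ℝ} (ha : a ^ 2 + e ^ 2 < r ^ 2)
    (hb : b ^ 2 + e ^ 2 < r ^ 2) : |a * b| < r ^ 2 + e ^ 2 := by
  rw [abs_lt]
  constructor <;> nlinarith [sq_nonneg (a - b), sq_nonneg (a + b), sq_nonneg e]

theorem eq_and_eq_or_eq_and_eq_of_im_eq_of_angle_eq {r : ℝ} {x y p q : ℂ}
    (hx : ‖x‖ < r) (hy : ‖y‖ < r) (hp : ‖p‖ < r) (hq : ‖q‖ < r) (hxy : x ≠ y) (hpq : p ≠ q)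
    (hyx : y.im = x.im) (hpx : p.im = x.im) (hqx : q.im = x.im)
    (hangle : ∀ z : ℂ, ‖z‖ = r → ∠ x z y = ∠ p z q) :
    (x = p ∧ y = q) ∨ (x = q ∧ y = p) := by
  set e := x.im
  have hr : 0 ≤ r := (norm_nonneg x).trans hx.le
  have re_sq_add {z : ℂ} (hz : ‖z‖ < r) (hze : z.im = e) : z.re ^ 2 + e ^ 2 < r ^ 2 := by
    rw [← hze, ← normSq_add_mul_I, re_add_im, ← Complex.sq_norm]
    exact pow_lt_pow_left₀ hz (norm_nonneg z) two_ne_zero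
  have H : ∀ s h : ℝ, s ^ 2 + h ^ 2 = r ^ 2 → e ≠ h →
      ((x.re - s) * (y.re - s) + (e - h) ^ 2) * |p.re - q.re| =
        ((p.re - s) * (q.re - s) + (e - h) ^ 2) * |x.re - y.re| := by
    intro s h hsh heh
    apply mul_abs_sub_eq_of_angle_eq heh
    have hform {z : ℂ} (hz : z.im = e) : (z.re : ℂ) + e * I = z := hz ▸ re_add_im z
    rw [hform rfl, hform hyx, hform hpx, hform hqx]
    exact hangle _ (by rw [norm_add_mul_I, hsh, Real.sqrt_sq hr])
  obtain ⟨h₁, h₂⟩ := add_mul_eq_and_mul_add_mul_eq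
    (by linarith [re_sq_add hx rfl, sq_nonneg x.re]) H
  have hre {z w : ℂ} (hz : z.im = e) (hw : w.im = e) (h : z ≠ w) : z.re ≠ w.re :=
    fun hzw => h (Complex.ext hzw (hz.trans hw.symm))
  have hD := abs_sub_eq_abs_sub_of_relations (hre rfl hyx hxy) (hre hpx hqx hpq)
    (abs_mul_lt_of_sq_add_sq_lt (re_sq_add hx rfl) (re_sq_add hy hyx))
    (abs_mul_lt_of_sq_add_sq_lt (re_sq_add hp hpx) (re_sq_add hq hqx)) h₁ h₂
  have hD₀ : |x.re - y.re| ≠ 0 := abs_ne_zero.2 (sub_ne_zero.2 (hre rfl hyx hxy))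
  rw [hD] at hD₀ h₁ h₂
  rcases eq_and_eq_or_eq_and_eq_of_add_eq_of_mul_eq (mul_right_cancel₀ hD₀ h₁)
    (by linarith [mul_right_cancel₀ hD₀ h₂]) with ⟨h₃, h₄⟩ | ⟨h₃, h₄⟩
  · exact Or.inl ⟨Complex.ext h₃ hpx.symm, Complex.ext h₄ (hyx.trans hqx.symm)⟩
  · exact Or.inr ⟨Complex.ext h₃ hqx.symm, Complex.ext h₄ (hyx.trans hpx.symm)⟩

theorem stmt6_general (r : ℝ) (x y p q : ℂ)
    (hx : ‖x‖ < r) (hy : ‖y‖ < r)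
    (hp : ‖p‖ < r) (hq : ‖q‖ < r)
    (hxy : x ≠ y) (hpq : p ≠ q)
    (hcol : Collinear ℝ ({x, y, p, q} : Set ℂ))
    (hangle : ∀ z : ℂ, ‖z‖ = r → ∠ x z y = ∠ p z q) :
    (x = p ∧ y = q) ∨ (x = q ∧ y = p) := by
  obtain ⟨u, hu, e, he⟩ := exists_norm_eq_one_forall_im_div_eq hcol
  have hu₀ : u ≠ 0 := norm_ne_zero_iff.1 (hu.symm ▸ one_ne_zero)
  have hnorm (z : ℂ) : ‖z / u‖ = ‖z‖ := by rw [norm_div, hu, div_one]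
  have hdiv {z w : ℂ} : z / u = w / u ↔ z = w := div_left_inj' hu₀
  have hangle' (z : ℂ) (hz : ‖z‖ = r) : ∠ (x / u) z (y / u) = ∠ (p / u) z (q / u) := by
    rw [← angle_mul_left_eq hu₀, ← angle_mul_left_eq hu₀ (p / u), mul_div_cancel₀ _ hu₀,
      mul_div_cancel₀ _ hu₀, mul_div_cancel₀ _ hu₀, mul_div_cancel₀ _ hu₀]
    exact hangle _ (by rw [norm_mul, hu, one_mul, hz])
  have him (z : ℂ) (hz : z ∈ ({x, y, p, q} : Set ℂ)) : (z / u).im = (x / u).im := by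
    rw [he z hz, he x (by simp)]
  simpa only [hdiv] using eq_and_eq_or_eq_and_eq_of_im_eq_of_angle_eq
    ((hnorm x).trans_lt hx) ((hnorm y).trans_lt hy) ((hnorm p).trans_lt hp)
    ((hnorm q).trans_lt hq) (hdiv.not.2 hxy) (hdiv.not.2 hpq)
    (him y (by simp)) (him p (by simp)) (him q (by simp)) hangle'

theorem stmt6 (r : ℝ) (hr : 0 < r) (x y p q : ℂ)
    (hx : ‖x‖ < r) (hy : ‖y‖ < r)
    (hp : ‖p‖ < r) (hq : ‖q‖ < r)
    (hxy : x ≠ y) (hpq : p ≠ q)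
    (hcol : Collinear ℝ ({x, y, p, q} : Set ℂ))
    (hangle : ∀ z : ℂ, ‖z‖ = r → ∠ x z y = ∠ p z q) :
    (x = p ∧ y = q) ∨ (x = q ∧ y = p) :=
  stmt6_general r x y p q hx hy hp hq hxy hpq hcol hangle
end

section
/- Let x, y, p, q be distinct points in the open unit disk of ℂ with x ≠ y and p ≠ q. Suppose the rational function λ(z) = ((z−q)(z−x))/((z−p)(z−y)) is real and positive for all z with |z| = r (where |x|,|y|,|p|,|q| < r). Then the polynomial identity (q̄z − r²)(x̄z − r²)(z − y)(z − p) = (p̄z − r²)(ȳz − r²)(z − q)(z − x) holds for all z ∈ ℂ, and consequently x = p and y = q. -/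
/-!
On the circle `‖z‖ = r` we have `r² = z * conj z`, so `conj (z - a) * z = r² - conj a * z`. Multiplying the
reality condition `conj λ = λ`, cleared of denominators, by `z²` therefore turns it into the quartic
polynomial identity, which holds on the infinite circle and hence everywhere. At `z = x` its right side
vanishes, while on the left `conj q * x - r²` and `conj x * x - r²` are nonzero (as `‖q‖, ‖x‖ < r`) and
`x ≠ y`; so `x = p`. Symmetrically, `z = y` gives `y = q`.
-/

open Complex ComplexConjugate Polynomial

theorem Complex.sphere_infinite (c : ℂ) {r : ℝ} (hr : 0 < r) : (Metric.sphere c r).Infinite :=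
  (isPreconnected_sphere (rank_real_complex ▸ Nat.one_lt_ofNat) c r).infinite_of_nontrivial
    ⟨c + r, by simp [hr.le], c - r, by simp [hr.le], ne_of_apply_ne re (by simp; linarith)⟩

theorem Polynomial.eq_of_eval_eq_on_sphere {P Q : ℂ[X]} {r : ℝ} (hr : 0 < r)
    (h : ∀ z : ℂ, ‖z‖ = r → P.eval z = Q.eval z) : P = Q :=
  eq_of_infinite_eval_eq P Q <|
    (Complex.sphere_infinite 0 hr).mono fun z hz => h z (by simpa using hz)

theorem Complex.conj_mul_ne_sq_of_norm_lt {a b : ℂ} {r : ℝ} (ha : ‖a‖ < r) (hb : ‖b‖ ≤ r) :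
    conj a * b ≠ (r : ℂ) ^ 2 := by
  intro h
  have := congrArg norm h
  rw [norm_mul, norm_conj, norm_pow, norm_real, Real.norm_eq_abs, sq_abs] at this
  nlinarith [norm_nonneg a, norm_nonneg b]

theorem Complex.conj_mul_sub_sq_mul_eq_of_im_div_eq_zero {a b c d z : ℂ} {r : ℝ} (hz : ‖z‖ = r)
    (hc : z ≠ c) (hd : z ≠ d) (him : ((z - a) * (z - b) / ((z - c) * (z - d))).im = 0) :
    (conj a * z - (r : ℂ) ^ 2) * (conj b * z - (r : ℂ) ^ 2) * (z - d) * (z - c) =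
      (conj c * z - (r : ℂ) ^ 2) * (conj d * z - (r : ℂ) ^ 2) * (z - a) * (z - b) := by
  have hden : (z - c) * (z - d) ≠ 0 := mul_ne_zero (sub_ne_zero.2 hc) (sub_ne_zero.2 hd)
  have hreal := conj_eq_iff_im.2 him
  rw [map_div₀, div_eq_div_iff ((_root_.map_ne_zero _).2 hden) hden] at hreal
  simp only [map_mul, map_sub] at hreal
  rw [← hz, ← mul_conj']
  linear_combination z ^ 2 * hreal

theorem stmt7_general (r : ℝ) (x y p q : ℂ)
    (hx : ‖x‖ < r) (hy : ‖y‖ < r)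
    (hp : ‖p‖ < r) (hq : ‖q‖ < r)
    (hxy : x ≠ y)
    (hlam : ∀ z : ℂ, ‖z‖ = r →
      (((z - q) * (z - x)) / ((z - p) * (z - y))).im = 0 ∧
        0 < (((z - q) * (z - x)) / ((z - p) * (z - y))).re) :
    (∀ z : ℂ,
        ((starRingEnd ℂ) q * z - (r : ℂ) ^ 2) * ((starRingEnd ℂ) x * z - (r : ℂ) ^ 2) *
            (z - y) * (z - p) =
          ((starRingEnd ℂ) p * z - (r : ℂ) ^ 2) * ((starRingEnd ℂ) y * z - (r : ℂ) ^ 2) *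
            (z - q) * (z - x)) ∧
      x = p ∧ y = q := by
  have hr : 0 < r := (norm_nonneg x).trans_lt hx
  have hne {a z : ℂ} (ha : ‖a‖ < r) (hz : ‖z‖ = r) : z ≠ a := ne_of_apply_ne norm (hz ▸ ha.ne')
  have hpoly := Polynomial.eq_of_eval_eq_on_sphere hr
    (P := (C (conj q) * X - C ((r : ℂ) ^ 2)) * (C (conj x) * X - C ((r : ℂ) ^ 2)) *
      (X - C y) * (X - C p))
    (Q := (C (conj p) * X - C ((r : ℂ) ^ 2)) * (C (conj y) * X - C ((r : ℂ) ^ 2)) *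
      (X - C q) * (X - C x))
    fun z hz => by
      simpa using
        conj_mul_sub_sq_mul_eq_of_im_div_eq_zero hz (hne hp hz) (hne hy hz) (hlam z hz).1
  refine ⟨fun z => by simpa using congrArg (eval z) hpoly, ?_, ?_⟩
  · simpa [sub_eq_zero, hxy, conj_mul_ne_sq_of_norm_lt hq hx.le,
      conj_mul_ne_sq_of_norm_lt hx hx.le] using congrArg (eval x) hpoly
  · simpa [sub_eq_zero, hxy.symm, conj_mul_ne_sq_of_norm_lt hp hy.le,
      conj_mul_ne_sq_of_norm_lt hy hy.le] using (congrArg (eval y) hpoly).symm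

theorem stmt7 (r : ℝ) (hr : 0 < r) (x y p q : ℂ)
    (hx : ‖x‖ < r) (hy : ‖y‖ < r)
    (hp : ‖p‖ < r) (hq : ‖q‖ < r)
    (hxy : x ≠ y) (hpq : p ≠ q)
    (hlam : ∀ z : ℂ, ‖z‖ = r →
      (((z - q) * (z - x)) / ((z - p) * (z - y))).im = 0 ∧
        0 < (((z - q) * (z - x)) / ((z - p) * (z - y))).re) :
    (∀ z : ℂ,
        ((starRingEnd ℂ) q * z - (r : ℂ) ^ 2) * ((starRingEnd ℂ) x * z - (r : ℂ) ^ 2) *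
            (z - y) * (z - p) =
          ((starRingEnd ℂ) p * z - (r : ℂ) ^ 2) * ((starRingEnd ℂ) y * z - (r : ℂ) ^ 2) *
            (z - q) * (z - x)) ∧
      x = p ∧ y = q :=
  stmt7_general r x y p q hx hy hp hq hxy hlam
end
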